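/- arXiv:0904.3183 — 2 statements merged into one kernel-verified Lean document; each statement's English description precedes it below -/
import Mathlib

section
/- Let M be a diamond with atom set A. For any vector x : [n] × A → ℝ and any tuples a, b ∈ M^n, x(a) + x(b) ≤ x(a ⊓ b) + x(a ⊔ b), i.e., the function y ↦ x(y) is supermodular on M^n. -/
set_option linter.unreachableTactic false
set_option linter.unusedTactic false
set_option linter.unusedVariables false

inductive Dia (A : Type) : Type where
  | bot : Dia A
  | atom : A → Dia A
  | top : Dia A
  deriving DecidableEq

namespace Dia

variable {A : Type} [DecidableEq A]

instance : Lattice (Dia A) where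
  le x y := x = bot ∨ y = top ∨ x = y
  le_refl x := Or.inr (Or.inr rfl)
  le_trans x y z hxy hyz := by
    rcases hxy with h | h | h <;> rcases hyz with h' | h' | h' <;> simp_all
  le_antisymm x y hxy hyx := by
    rcases hxy with h | h | h <;> rcases hyx with h' | h' | h' <;> simp_all
  sup x y := if x = bot then y else if y = bot then x else if x = y then x else top
  inf x y := if x = top then y else if y = top then x else if x = y then x else bot
  le_sup_left x y := by
    try dsimp only
    split_ifs <;> (try simp_all) <;> (try split_ifs) <;> (try simp_all)
  le_sup_right x y := by
    try dsimp only
    split_ifs <;> (try simp_all) <;> (try split_ifs) <;> (try simp_all)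
  sup_le x y z hxz hyz := by
    try dsimp only
    rcases hxz with h | h | h <;> rcases hyz with h' | h' | h' <;> split_ifs <;> (try simp_all) <;> (try split_ifs) <;> (try simp_all)
  inf_le_left x y := by
    try dsimp only
    split_ifs <;> (try simp_all) <;> (try split_ifs) <;> (try simp_all)
  inf_le_right x y := by
    try dsimp only
    split_ifs <;> (try simp_all) <;> (try split_ifs) <;> (try simp_all)
  le_inf x y z hxy hxz := by
    try dsimp only
    rcases hxy with h | h | h <;> rcases hxz with h' | h' | h' <;> split_ifs <;> (try simp_all) <;> (try split_ifs) <;> (try simp_all)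

instance : BoundedOrder (Dia A) where
  top := top
  bot := bot
  le_top x := Or.inr (Or.inl rfl)
  bot_le x := Or.inl rfl

def drank : Dia A → ℕ
  | bot => 0
  | atom _ => 1
  | top => 2

noncomputable def gval (v : A → ℝ) : Dia A → ℝ
  | bot => 0
  | atom a => v a
  | top => sSup {r : ℝ | ∃ a a' : A, a ≠ a' ∧ r = v a + v a'}

end Dia

variable {A : Type} [DecidableEq A] {n : ℕ}

noncomputable def evalD (x : Fin n → A → ℝ) (y : Fin n → Dia A) : ℝ :=
  ∑ i, Dia.gval (x i) (y i)

def Submod (f : (Fin n → Dia A) → ℝ) : Prop :=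
  ∀ a b, f (a ⊓ b) + f (a ⊔ b) ≤ f a + f b

def InP (f : (Fin n → Dia A) → ℝ) (x : Fin n → A → ℝ) : Prop :=
  ∀ y, evalD x y ≤ f y

def UnifiedRow (v : A → ℝ) : Prop :=
  ∃ p : A, (∀ a b : A, a ≠ p → b ≠ p → v a = v b) ∧ ∀ a, v a ≤ v p

def Unified (x : Fin n → A → ℝ) : Prop := ∀ i, UnifiedRow (x i)


namespace Dia

theorem add_le_gval_top {A : Type} [Finite A] (v : A → ℝ) {a a' : A} (h : a ≠ a') :
    v a + v a' ≤ gval v top := by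
  have hfin : {r : ℝ | ∃ a a' : A, a ≠ a' ∧ r = v a + v a'}.Finite :=
    (Set.finite_range fun p : A × A => v p.1 + v p.2).subset
      fun _ ⟨a, a', _, hr⟩ => ⟨(a, a'), hr.symm⟩
  exact le_csSup hfin.bddAbove ⟨a, a', h, rfl⟩

variable {A : Type} [DecidableEq A]

theorem le_iff {x y : Dia A} : x ≤ y ↔ x = bot ∨ y = top ∨ x = y := Iff.rfl

theorem exists_atom_ne_of_not_le {p q : Dia A} (hpq : ¬p ≤ q) (hqp : ¬q ≤ p) :
    ∃ a a', a ≠ a' ∧ p = atom a ∧ q = atom a' := by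
  cases p <;> cases q <;> simp_all [le_iff]

theorem atom_inf_atom_of_ne {a a' : A} (h : a ≠ a') : atom a ⊓ atom a' = bot := by
  show (if _ then _ else _) = _
  simp [h]

theorem atom_sup_atom_of_ne {a a' : A} (h : a ≠ a') : atom a ⊔ atom a' = top := by
  show (if _ then _ else _) = _
  simp [h]

/-- Comparable arguments are merely permuted by `⊓, ⊔`; the only other case is two distinct
atoms, whose join `top` is valued by the best pair of atoms. -/
theorem gval_add_le_gval_inf_add_gval_sup [Finite A] (v : A → ℝ) (p q : Dia A) :
    gval v p + gval v q ≤ gval v (p ⊓ q) + gval v (p ⊔ q) := by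
  by_cases hpq : p ≤ q
  · rw [inf_eq_left.2 hpq, sup_eq_right.2 hpq]
  by_cases hqp : q ≤ p
  · rw [inf_eq_right.2 hqp, sup_eq_left.2 hqp, add_comm]
  obtain ⟨a, a', hne, rfl, rfl⟩ := exists_atom_ne_of_not_le hpq hqp
  rw [atom_inf_atom_of_ne hne, atom_sup_atom_of_ne hne]
  simpa only [gval, zero_add] using add_le_gval_top v hne

end Dia

theorem stmt3_general [Fintype A]
    (x : Fin n → A → ℝ) (a b : Fin n → Dia A) :
    evalD x a + evalD x b ≤ evalD x (a ⊓ b) + evalD x (a ⊔ b) := by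
  simp only [evalD, ← Finset.sum_add_distrib, Pi.inf_apply, Pi.sup_apply]
  exact Finset.sum_le_sum fun i _ => Dia.gval_add_le_gval_inf_add_gval_sup (x i) (a i) (b i)

/-- the evaluation map y ↦ x(y) is supermodular on M^n. -/
theorem stmt3 [Fintype A] (hA : 3 ≤ Fintype.card A)
    (x : Fin n → A → ℝ) (a b : Fin n → Dia A) :
    evalD x a + evalD x b ≤ evalD x (a ⊓ b) + evalD x (a ⊔ b) :=
  stmt3_general x a b
end

section
/- Greedy construction over diamonds: Let M be a diamond with atoms A and f : M^n → ℝ submodular with f(0) ≥ 0. Define atoms p_1, ..., p_n and a vector x inductively: p_{i+1} is a maximizer over a ∈ A of f(v_i[i+1 = a]) where v_i is the tuple whose first i coordinates are 1 and the rest 0; set x(i+1, p_{i+1}) = f(v_i[i+1 = p_{i+1}]) − f(v_i), and x(i+1, a) = f(v_{i+1}) − f(v_i[i+1 = p_{i+1}]) for a ≠ p_{i+1}. Then x(i+1, p_{i+1}) ≥ x(i+1, a) for every atom a, i.e., x is unified. -/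
set_option linter.unreachableTactic false
set_option linter.unusedTactic false
set_option linter.unusedVariables false

variable {A : Type} [DecidableEq A] {n : ℕ}

/-- The tuple whose first `k` coordinates are the top element and whose
remaining coordinates are the bottom element. -/
def vtup (A : Type) (n k : ℕ) : Fin n → Dia A :=
  fun j => if (j : ℕ) < k then Dia.top else Dia.bot

/-!
Since `p i` maximises `f` over the atoms placed at coordinate `i` of `v_i`, and two distinct
atoms `q ≠ q'` there meet in `v_i` and join in `v_{i+1}`, submodularity gives
`f v_i + f v_{i+1} ≤ f (v_i[i = q]) + f (v_i[i = q']) ≤ 2 f (v_i[i = p i])`,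
which rearranges to `x i a ≤ x i (p i)`.
-/

namespace Dia

theorem atom_inf_atom {a b : A} (hab : a ≠ b) : atom a ⊓ atom b = (bot : Dia A) := by
  change (if atom a = top then atom b else if atom b = top then atom a
    else if atom a = atom b then atom a else bot) = bot
  simp [hab]

theorem atom_sup_atom {a b : A} (hab : a ≠ b) : atom a ⊔ atom b = (top : Dia A) := by
  change (if atom a = bot then atom b else if atom b = bot then atom a
    else if atom a = atom b then atom a else top) = top
  simp [hab]

end Dia

open Function

theorem Submod.update_bot_add_update_top_le {f : (Fin n → Dia A) → ℝ} (hf : Submod f)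
    (y : Fin n → Dia A) (i : Fin n) {a b : A} (hab : a ≠ b) :
    f (update y i Dia.bot) + f (update y i Dia.top) ≤
      f (update y i (Dia.atom a)) + f (update y i (Dia.atom b)) := by
  simpa only [← update_inf, ← update_sup, Dia.atom_inf_atom hab, Dia.atom_sup_atom hab]
    using hf (update y i (Dia.atom a)) (update y i (Dia.atom b))

omit [DecidableEq A] in
theorem update_vtup_self_bot (i : Fin n) : update (vtup A n i) i Dia.bot = vtup A n i :=
  update_eq_self_iff.2 (by simp [vtup])

omit [DecidableEq A] in
theorem update_vtup_self_top (i : Fin n) :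
    update (vtup A n i) i Dia.top = vtup A n ((i : ℕ) + 1) := by
  funext j
  rcases eq_or_ne j i with rfl | hji
  · simp [vtup]
  · have : (j : ℕ) ≠ i := Fin.val_ne_of_ne hji
    simp only [update_of_ne hji, vtup]
    congr 1
    exact propext (by omega)

theorem stmt6_general [Fintype A] (hA : 3 ≤ Fintype.card A)
    (f : (Fin n → Dia A) → ℝ) (hf : Submod f)
    (p : Fin n → A) (x : Fin n → A → ℝ)
    (hmax : ∀ (i : Fin n) (a : A),
      f (Function.update (vtup A n i) i (Dia.atom a)) ≤
        f (Function.update (vtup A n i) i (Dia.atom (p i))))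
    (hxp : ∀ i : Fin n,
      x i (p i) = f (Function.update (vtup A n i) i (Dia.atom (p i))) - f (vtup A n i))
    (hxa : ∀ (i : Fin n) (a : A), a ≠ p i →
      x i a = f (vtup A n ((i : ℕ) + 1)) -
        f (Function.update (vtup A n i) i (Dia.atom (p i)))) :
    ∀ (i : Fin n) (a : A), x i a ≤ x i (p i) := by
  intro i a
  rcases eq_or_ne a (p i) with rfl | ha
  · rfl
  obtain ⟨q, q', hqq'⟩ := Fintype.exists_pair_of_one_lt_card (by omega : 1 < Fintype.card A)
  have hsub := hf.update_bot_add_update_top_le (vtup A n i) i hqq'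
  rw [update_vtup_self_bot, update_vtup_self_top] at hsub
  rw [hxp i, hxa i a ha]
  linarith [hmax i q, hmax i q']

/-- in the greedy construction, x(i, p_i) ≥ x(i, a) for every atom
a, i.e. the greedy vector is unified. -/
theorem stmt6 [Fintype A] (hA : 3 ≤ Fintype.card A)
    (f : (Fin n → Dia A) → ℝ) (hf : Submod f)
    (h0 : 0 ≤ f (fun _ => Dia.bot))
    (p : Fin n → A) (x : Fin n → A → ℝ)
    (hmax : ∀ (i : Fin n) (a : A),
      f (Function.update (vtup A n i) i (Dia.atom a)) ≤
        f (Function.update (vtup A n i) i (Dia.atom (p i))))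
    (hxp : ∀ i : Fin n,
      x i (p i) = f (Function.update (vtup A n i) i (Dia.atom (p i))) - f (vtup A n i))
    (hxa : ∀ (i : Fin n) (a : A), a ≠ p i →
      x i a = f (vtup A n ((i : ℕ) + 1)) -
        f (Function.update (vtup A n i) i (Dia.atom (p i)))) :
    ∀ (i : Fin n) (a : A), x i a ≤ x i (p i) :=
  stmt6_general hA f hf p x hmax hxp hxa
end
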